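/- Let χ^a_{bc} : U → ℝ and Γ^i_{jk} : V → ℝ be smooth, and consider the Berwald N-linear connection on E determined by the nonlinear connection N1^{(a)}_{(i)b} = χ^a_{cb} p_i^c, N2^{(b)}_{(j)k} = −Γ^i_{jk} p_i^b and the coefficients A^a_{bc} = χ^a_{bc}, H^i_{jk} = Γ^i_{jk}, A^{(a)(j)}_{(i)(b)c} = −δ^j_i χ^a_{bc}, H^{(a)(j)}_{(i)(b)k} = δ^a_b Γ^j_{ik}, all other coefficients zero. Then its curvature ℝ vanishes on all triples of adapted frame fields except: ℝ(δ/δt^c, δ/δt^b) δ/δt^a = κ^d_{abc} δ/δt^d, ℝ(δ/δt^c, δ/δt^b) ∂/∂p_i^a = κ^d_{abc} ∂/∂p_i^d, ℝ(δ/δx^k, δ/δx^j) δ/δx^i = 𝐫^l_{ijk} δ/δx^l, and ℝ(δ/δx^k, δ/δx^j) ∂/∂p_i^a = −𝐫^i_{ljk} ∂/∂p_l^a (i.e., in the paper's d-tensor notation, the only nonzero curvature d-tensors are R^d_{abc} = κ^d_{abc}, R^{(d)(i)}_{(l)(a)bc} = −δ^i_l κ^d_{abc}, R^l_{ijk} =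 𝐫^l_{ijk}, R^{(d)(i)}_{(l)(a)jk} = δ^d_a 𝐫^i_{ljk}), where κ^d_{abc}(t) = ∂χ^d_{ab}/∂t^c − ∂χ^d_{ac}/∂t^b + χ^f_{ab} χ^d_{fc} − χ^f_{ac} χ^d_{fb} and 𝐫^l_{ijk}(x) = ∂Γ^l_{ij}/∂x^k − ∂Γ^l_{ik}/∂x^j + Γ^r_{ij} Γ^l_{rk} − Γ^r_{ik} Γ^l_{rj}. -/

import Mathlib

noncomputable section

open scoped BigOperators

/-- The local model of the dual 1-jet bundle: `(t, x, p)` with `p : Fin m → Fin n → ℝ`,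
`p a i = p_i^a`.  The tangent space at any point is identified with the same product. -/
abbrev E (m n : ℕ) : Type := (Fin m → ℝ) × (Fin n → ℝ) × (Fin m → Fin n → ℝ)

/-- The natural frame vector `∂/∂t^a`. -/
def dTnat (m n : ℕ) (a : Fin m) : E m n := (Pi.single a 1, 0, 0)

/-- The natural frame vector `∂/∂x^i`. -/
def dXnat (m n : ℕ) (i : Fin n) : E m n := (0, Pi.single i 1, 0)

/-- The natural (vertical) frame vector `∂/∂p_i^a`. -/
def dPnat (m n : ℕ) (a : Fin m) (i : Fin n) : E m n := (0, 0, Pi.single a (Pi.single i 1))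

/-- A nonlinear connection: coefficient families `N1 a i b = N1^{(a)}_{(i)b}` and
`N2 a i j = N2^{(a)}_{(i)j}`. -/
structure NLC (m n : ℕ) where
  N1 : Fin m → Fin n → Fin m → E m n → ℝ
  N2 : Fin m → Fin n → Fin n → E m n → ℝ

variable {m n : ℕ}

/-- Adapted frame vector field `δ/δt^b`. -/
def NLC.dT (N : NLC m n) (b : Fin m) : E m n → E m n :=
  fun u => (Pi.single b 1, 0, fun a i => -(N.N1 a i b u))

/-- Adapted frame vector field `δ/δx^j`. -/
def NLC.dX (N : NLC m n) (j : Fin n) : E m n → E m n :=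
  fun u => (0, Pi.single j 1, fun a i => -(N.N2 a i j u))

/-- The constant vertical frame vector field `∂/∂p_k^c`. -/
def dPfield (m n : ℕ) (c : Fin m) (k : Fin n) : E m n → E m n := fun _ => dPnat m n c k

/-- Lie bracket of vector fields on the model. -/
def lie (X Y : E m n → E m n) : E m n → E m n :=
  fun u => fderiv ℝ Y u (X u) - fderiv ℝ X u (Y u)

/-- The `δ/δt^c`-derivative of a function. -/
def NLC.delT (N : NLC m n) (c : Fin m) (f : E m n → ℝ) (u : E m n) : ℝ :=
  fderiv ℝ f u (N.dT c u)

/-- The `δ/δx^k`-derivative of a function. -/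
def NLC.delX (N : NLC m n) (k : Fin n) (f : E m n → ℝ) (u : E m n) : ℝ :=
  fderiv ℝ f u (N.dX k u)

/-- The `∂/∂p_k^c`-derivative of a function. -/
def delP (c : Fin m) (k : Fin n) (f : E m n → ℝ) (u : E m n) : ℝ :=
  fderiv ℝ f u (dPnat m n c k)

/-- `R^{(a)}_{(i)bc}`. -/
def NLC.R1 (N : NLC m n) (a : Fin m) (i : Fin n) (b c : Fin m) (u : E m n) : ℝ :=
  N.delT c (N.N1 a i b) u - N.delT b (N.N1 a i c) u

/-- `R^{(a)}_{(i)bk}`. -/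
def NLC.Rmix (N : NLC m n) (a : Fin m) (i : Fin n) (b : Fin m) (k : Fin n) (u : E m n) : ℝ :=
  N.delX k (N.N1 a i b) u - N.delT b (N.N2 a i k) u

/-- `R^{(a)}_{(i)jk}`. -/
def NLC.R2 (N : NLC m n) (a : Fin m) (i j k : Fin n) (u : E m n) : ℝ :=
  N.delX k (N.N2 a i j) u - N.delX j (N.N2 a i k) u

/-- `B^{(a)(k)}_{(i)b(c)} = ∂N1^{(a)}_{(i)b}/∂p_k^c`. -/
def NLC.B1 (N : NLC m n) (a : Fin m) (i : Fin n) (b c : Fin m) (k : Fin n) (u : E m n) : ℝ :=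
  delP c k (N.N1 a i b) u

/-- `B^{(a)(k)}_{(i)j(c)} = ∂N2^{(a)}_{(i)j}/∂p_k^c`. -/
def NLC.B2 (N : NLC m n) (a : Fin m) (i j : Fin n) (c : Fin m) (k : Fin n) (u : E m n) : ℝ :=
  delP c k (N.N2 a i j) u

/-- Smoothness of the coefficients of a nonlinear connection on a set. -/
def NLC.SmoothOn (N : NLC m n) (O : Set (E m n)) : Prop :=
  (∀ a i b, ContDiffOn ℝ (⊤ : ℕ∞) (N.N1 a i b) O) ∧ (∀ a i j, ContDiffOn ℝ (⊤ : ℕ∞) (N.N2 a i j) O)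

/-- The open set `U × V × P` of the model. -/
def modelSet (U : Set (Fin m → ℝ)) (V : Set (Fin n → ℝ)) : Set (E m n) :=
  U ×ˢ (V ×ˢ (Set.univ : Set (Fin m → Fin n → ℝ)))

/-- Jacobian matrix entry `(Jac f t) b a = ∂f^b/∂t^a`. -/
def Jac {k : ℕ} (f : (Fin k → ℝ) → (Fin k → ℝ)) (t : Fin k → ℝ) (b a : Fin k) : ℝ :=
  fderiv ℝ f t (Pi.single a 1) b

/-- A jet coordinate change: smooth diffeomorphisms `φ : U → U'` and `ψ : V → V'`. -/
structure JetChange (m n : ℕ) where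
  U : Set (Fin m → ℝ)
  U' : Set (Fin m → ℝ)
  V : Set (Fin n → ℝ)
  V' : Set (Fin n → ℝ)
  hUopen : IsOpen U
  hU'open : IsOpen U'
  hVopen : IsOpen V
  hV'open : IsOpen V'
  φ : (Fin m → ℝ) → (Fin m → ℝ)
  φi : (Fin m → ℝ) → (Fin m → ℝ)
  ψ : (Fin n → ℝ) → (Fin n → ℝ)
  ψi : (Fin n → ℝ) → (Fin n → ℝ)
  hφ : ContDiffOn ℝ (⊤ : ℕ∞) φ U
  hφi : ContDiffOn ℝ (⊤ : ℕ∞) φi U'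
  hψ : ContDiffOn ℝ (⊤ : ℕ∞) ψ V
  hψi : ContDiffOn ℝ (⊤ : ℕ∞) ψi V'
  hφmaps : Set.MapsTo φ U U'
  hφimaps : Set.MapsTo φi U' U
  hψmaps : Set.MapsTo ψ V V'
  hψimaps : Set.MapsTo ψi V' V
  hφleft : ∀ t ∈ U, φi (φ t) = t
  hφright : ∀ s ∈ U', φ (φi s) = s
  hψleft : ∀ x ∈ V, ψi (ψ x) = x
  hψright : ∀ y ∈ V', ψ (ψi y) = y

/-- The source domain `U × V × P` of a jet change. -/
def JetChange.src (C : JetChange m n) : Set (E m n) := modelSet C.U C.V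

/-- The induced map `Φ` on the dual 1-jet space:
`p̃_j^b = (∂t̃^b/∂t^c)(∂x^k/∂x̃^j) p_k^c`. -/
def JetChange.Φ (C : JetChange m n) : E m n → E m n :=
  fun u => (C.φ u.1, C.ψ u.2.1,
    fun b j => ∑ c, ∑ k, Jac C.φ u.1 b c * Jac C.ψi (C.ψ u.2.1) k j * u.2.2 c k)

/-- The transformation rule (7) for nonlinear connections under a jet change. -/
def JetChange.Rule7 (C : JetChange m n) (N N' : NLC m n) : Prop :=
  ∀ u ∈ C.src,
    (∀ b j a,
      ∑ c, N'.N1 b j c (C.Φ u) * Jac C.φ u.1 c a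
        = (∑ c, ∑ k, N.N1 c k a u * Jac C.φ u.1 b c * Jac C.ψi (C.ψ u.2.1) k j)
          - fderiv ℝ (fun v => (C.Φ v).2.2 b j) u (dTnat m n a))
    ∧ (∀ b j i,
      ∑ k, N'.N2 b j k (C.Φ u) * Jac C.ψ u.2.1 k i
        = (∑ c, ∑ k, N.N2 c k i u * Jac C.φ u.1 b c * Jac C.ψi (C.ψ u.2.1) k j)
          - fderiv ℝ (fun v => (C.Φ v).2.2 b j) u (dXnat m n i))

/-- The adapted 1-form `δp_i^a` evaluated at `u` on a tangent vector `ξ`. -/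
def delPform (N : NLC m n) (a : Fin m) (i : Fin n) (u : E m n) (ξ : E m n) : ℝ :=
  ξ.2.2 a i + (∑ b, N.N1 a i b u * ξ.1 b) + (∑ j, N.N2 a i j u * ξ.2.1 j)

/-- The `T`-horizontal subspace at `u`. -/
def NLC.HT (N : NLC m n) (u : E m n) : Submodule ℝ (E m n) :=
  Submodule.span ℝ (Set.range fun a => N.dT a u)

/-- The `M`-horizontal subspace at `u`. -/
def NLC.HM (N : NLC m n) (u : E m n) : Submodule ℝ (E m n) :=
  Submodule.span ℝ (Set.range fun i => N.dX i u)

/-- The vertical subspace. -/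
def Vert (m n : ℕ) : Submodule ℝ (E m n) :=
  Submodule.span ℝ (Set.range fun ai : Fin m × Fin n => dPnat m n ai.1 ai.2)

/-- The horizontal subspace at `u`. -/
def NLC.Hor (N : NLC m n) (u : E m n) : Submodule ℝ (E m n) :=
  Submodule.span ℝ ((Set.range fun a => N.dT a u) ∪ (Set.range fun i => N.dX i u))

/-- Pointwise `T`-horizontal projection. -/
def NLC.hT (N : NLC m n) (u : E m n) (ξ : E m n) : E m n :=
  (ξ.1, 0, fun a i => -∑ b, N.N1 a i b u * ξ.1 b)

/-- Pointwise `M`-horizontal projection. -/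
def NLC.hM (N : NLC m n) (u : E m n) (ξ : E m n) : E m n :=
  (0, ξ.2.1, fun a i => -∑ j, N.N2 a i j u * ξ.2.1 j)

/-- Pointwise vertical projection. -/
def NLC.w (N : NLC m n) (u : E m n) (ξ : E m n) : E m n :=
  (0, 0, fun a i => ξ.2.2 a i + (∑ b, N.N1 a i b u * ξ.1 b) + (∑ j, N.N2 a i j u * ξ.2.1 j))

/-- The almost product structure `ℙ = h_T + h_M − w` of a nonlinear connection, pointwise. -/
def NLC.apP (N : NLC m n) (u : E m n) (ξ : E m n) : E m n :=
  (ξ.1, ξ.2.1, fun a i =>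
    -(ξ.2.2 a i) - 2 * (∑ b, N.N1 a i b u * ξ.1 b) - 2 * (∑ j, N.N2 a i j u * ξ.2.1 j))

/-- `h_T` applied to a vector field. -/
def NLC.hTF (N : NLC m n) (X : E m n → E m n) : E m n → E m n := fun u => N.hT u (X u)

/-- `h_M` applied to a vector field. -/
def NLC.hMF (N : NLC m n) (X : E m n → E m n) : E m n → E m n := fun u => N.hM u (X u)

/-- `w` applied to a vector field. -/
def NLC.wF (N : NLC m n) (X : E m n → E m n) : E m n → E m n := fun u => N.w u (X u)

/-- `ℙ` applied to a vector field. -/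
def NLC.PF (N : NLC m n) (X : E m n → E m n) : E m n → E m n := fun u => N.apP u (X u)

/-- The Nijenhuis tensor of the almost product structure `ℙ`. -/
def Nij (N : NLC m n) (X Y : E m n → E m n) : E m n → E m n :=
  fun u => N.PF (N.PF (lie X Y)) u + lie (N.PF X) (N.PF Y) u
    - N.PF (lie (N.PF X) Y) u - N.PF (lie X (N.PF Y)) u

/-- An `N`-linear connection: the nine adapted coefficient families.
Index conventions: `A1 a b c = A^a_{bc}`, `A2 i j c = A^i_{jc}`,
`A3 a i b j c = A^{(a)(j)}_{(i)(b)c}`, `H1 a b k = H^a_{bk}`, `H2 i j k = H^i_{jk}`,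
`H3 a i b j k = H^{(a)(j)}_{(i)(b)k}`, `C1 a b c k = C^{a(k)}_{b(c)}`,
`C2 i j c k = C^{i(k)}_{j(c)}`, `C3 a i b j c k = C^{(a)(j)(k)}_{(i)(b)(c)}`. -/
structure NLinConn (m n : ℕ) where
  A1 : Fin m → Fin m → Fin m → E m n → ℝ
  A2 : Fin n → Fin n → Fin m → E m n → ℝ
  A3 : Fin m → Fin n → Fin m → Fin n → Fin m → E m n → ℝ
  H1 : Fin m → Fin m → Fin n → E m n → ℝ
  H2 : Fin n → Fin n → Fin n → E m n → ℝ
  H3 : Fin m → Fin n → Fin m → Fin n → Fin n → E m n → ℝ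
  C1 : Fin m → Fin m → Fin m → Fin n → E m n → ℝ
  C2 : Fin n → Fin n → Fin m → Fin n → E m n → ℝ
  C3 : Fin m → Fin n → Fin m → Fin n → Fin m → Fin n → E m n → ℝ

/-- Smoothness of the coefficients of an `N`-linear connection on a set. -/
def NLinConn.SmoothOn (D : NLinConn m n) (O : Set (E m n)) : Prop :=
  (∀ a b c, ContDiffOn ℝ (⊤ : ℕ∞) (D.A1 a b c) O) ∧ (∀ i j c, ContDiffOn ℝ (⊤ : ℕ∞) (D.A2 i j c) O) ∧
  (∀ a i b j c, ContDiffOn ℝ (⊤ : ℕ∞) (D.A3 a i b j c) O) ∧ (∀ a b k, ContDiffOn ℝ (⊤ : ℕ∞) (D.H1 a b k) O) ∧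
  (∀ i j k, ContDiffOn ℝ (⊤ : ℕ∞) (D.H2 i j k) O) ∧ (∀ a i b j k, ContDiffOn ℝ (⊤ : ℕ∞) (D.H3 a i b j k) O) ∧
  (∀ a b c k, ContDiffOn ℝ (⊤ : ℕ∞) (D.C1 a b c k) O) ∧ (∀ i j c k, ContDiffOn ℝ (⊤ : ℕ∞) (D.C2 i j c k) O) ∧
  (∀ a i b j c k, ContDiffOn ℝ (⊤ : ℕ∞) (D.C3 a i b j c k) O)

/-- Adapted `t`-component of a vector field. -/
def compT (X : E m n → E m n) (a : Fin m) (u : E m n) : ℝ := (X u).1 a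

/-- Adapted `x`-component of a vector field. -/
def compX (X : E m n → E m n) (i : Fin n) (u : E m n) : ℝ := (X u).2.1 i

/-- Adapted vertical component of a vector field. -/
def compP (N : NLC m n) (X : E m n → E m n) (a : Fin m) (i : Fin n) (u : E m n) : ℝ :=
  (X u).2.2 a i + (∑ b, N.N1 a i b u * (X u).1 b) + (∑ j, N.N2 a i j u * (X u).2.1 j)

/-- Reconstruct a tangent vector from its adapted components. -/
def fromA (N : NLC m n) (ft : Fin m → ℝ) (fx : Fin n → ℝ) (fp : Fin m → Fin n → ℝ)
    (u : E m n) : E m n :=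
  (ft, fx, fun a i => fp a i - (∑ b, N.N1 a i b u * ft b) - (∑ j, N.N2 a i j u * fx j))

/-- Covariant derivative `D_{δ/δt^c} Y`. -/
def covT (N : NLC m n) (D : NLinConn m n) (c : Fin m) (Y : E m n → E m n) : E m n → E m n :=
  fun u => fromA N
    (fun a => N.delT c (compT Y a) u + ∑ b, compT Y b u * D.A1 a b c u)
    (fun i => N.delT c (compX Y i) u + ∑ j, compX Y j u * D.A2 i j c u)
    (fun a i => N.delT c (compP N Y a i) u - ∑ b, ∑ j, compP N Y b j u * D.A3 a i b j c u)
    u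

/-- Covariant derivative `D_{δ/δx^k} Y`. -/
def covX (N : NLC m n) (D : NLinConn m n) (k : Fin n) (Y : E m n → E m n) : E m n → E m n :=
  fun u => fromA N
    (fun a => N.delX k (compT Y a) u + ∑ b, compT Y b u * D.H1 a b k u)
    (fun i => N.delX k (compX Y i) u + ∑ j, compX Y j u * D.H2 i j k u)
    (fun a i => N.delX k (compP N Y a i) u - ∑ b, ∑ j, compP N Y b j u * D.H3 a i b j k u)
    u

/-- Covariant derivative `D_{∂/∂p_k^c} Y`. -/
def covP (N : NLC m n) (D : NLinConn m n) (c : Fin m) (k : Fin n) (Y : E m n → E m n) :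
    E m n → E m n :=
  fun u => fromA N
    (fun a => delP c k (compT Y a) u + ∑ b, compT Y b u * D.C1 a b c k u)
    (fun i => delP c k (compX Y i) u + ∑ j, compX Y j u * D.C2 i j c k u)
    (fun a i => delP c k (compP N Y a i) u - ∑ b, ∑ j, compP N Y b j u * D.C3 a i b j c k u)
    u

/-- Covariant derivative `D_X Y` of an `N`-linear connection. -/
def covD (N : NLC m n) (D : NLinConn m n) (X Y : E m n → E m n) : E m n → E m n :=
  fun u => (∑ c, compT X c u • covT N D c Y u) + (∑ k, compX X k u • covX N D k Y u)
    + ∑ c, ∑ k, compP N X c k u • covP N D c k Y u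

/-- Torsion of an `N`-linear connection. -/
def tors (N : NLC m n) (D : NLinConn m n) (X Y : E m n → E m n) : E m n → E m n :=
  fun u => covD N D X Y u - covD N D Y X u - lie X Y u

/-- Curvature of an `N`-linear connection. -/
def curvR (N : NLC m n) (D : NLinConn m n) (X Y Z : E m n → E m n) : E m n → E m n :=
  fun u => covD N D X (covD N D Y Z) u - covD N D Y (covD N D X Z) u
    - covD N D (lie X Y) Z u

/-- The Berwald nonlinear connection associated to linear connections `χ`, `Γ`. -/
def berN (χ : Fin m → Fin m → Fin m → (Fin m → ℝ) → ℝ)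
    (Γ : Fin n → Fin n → Fin n → (Fin n → ℝ) → ℝ) : NLC m n where
  N1 := fun a i b u => ∑ c, χ a c b u.1 * u.2.2 c i
  N2 := fun a i j u => -∑ k, Γ k i j u.2.1 * u.2.2 a k

/-- The Berwald `N`-linear connection associated to linear connections `χ`, `Γ`. -/
def berD (χ : Fin m → Fin m → Fin m → (Fin m → ℝ) → ℝ)
    (Γ : Fin n → Fin n → Fin n → (Fin n → ℝ) → ℝ) : NLinConn m n where
  A1 := fun a b c u => χ a b c u.1
  A2 := fun _ _ _ _ => 0
  A3 := fun a i b j c u => -((if j = i then (1 : ℝ) else 0) * χ a b c u.1)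
  H1 := fun _ _ _ _ => 0
  H2 := fun i j k u => Γ i j k u.2.1
  H3 := fun a i b j k u => (if a = b then (1 : ℝ) else 0) * Γ j i k u.2.1
  C1 := fun _ _ _ _ _ => 0
  C2 := fun _ _ _ _ _ => 0
  C3 := fun _ _ _ _ _ _ _ => 0

/-- Curvature tensor `κ^f_{gab}` of a linear connection `χ` on `U`. -/
def kapC (χ : Fin m → Fin m → Fin m → (Fin m → ℝ) → ℝ) (f g a b : Fin m)
    (t : Fin m → ℝ) : ℝ :=
  fderiv ℝ (χ f g a) t (Pi.single b 1) - fderiv ℝ (χ f g b) t (Pi.single a 1)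
    + (∑ e, χ e g a t * χ f e b t) - ∑ e, χ e g b t * χ f e a t

/-- Curvature tensor `𝐫^s_{rij}` of a linear connection `Γ` on `V`. -/
def rC (Γ : Fin n → Fin n → Fin n → (Fin n → ℝ) → ℝ) (s r i j : Fin n)
    (x : Fin n → ℝ) : ℝ :=
  fderiv ℝ (Γ s r i) x (Pi.single j 1) - fderiv ℝ (Γ s r j) x (Pi.single i 1)
    + (∑ l, Γ l r i x * Γ s l j x) - ∑ l, Γ l r j x * Γ s l i x

end

section Aux
open scoped BigOperators
variable {m n : ℕ}

lemma sum_single_mul (a : Fin m) (f : Fin m → ℝ) : (∑ b, (Pi.single a 1 : Fin m → ℝ) b * f b) = f a := by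
  simp [Pi.single_apply]

lemma sum_mul_single (a : Fin m) (f : Fin m → ℝ) : (∑ b, f b * (Pi.single a 1 : Fin m → ℝ) b) = f a := by
  simp [Pi.single_apply]

lemma sum_single_smul {k : ℕ} (a : Fin k) (f : Fin k → E m n) :
    (∑ b, (Pi.single a 1 : Fin k → ℝ) b • f b) = f a := by
  simp [Pi.single_apply, ite_smul]

variable (N : NLC m n) (D : NLinConn m n)

lemma compT_covT (c : Fin m) (Y : E m n → E m n) (a : Fin m) (u : E m n) :
    compT (covT N D c Y) a u = N.delT c (compT Y a) u + ∑ b, compT Y b u * D.A1 a b c u := rfl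

lemma compX_covT (c : Fin m) (Y : E m n → E m n) (i : Fin n) (u : E m n) :
    compX (covT N D c Y) i u = N.delT c (compX Y i) u + ∑ j, compX Y j u * D.A2 i j c u := rfl

lemma compP_covT (c : Fin m) (Y : E m n → E m n) (a : Fin m) (i : Fin n) (u : E m n) :
    compP N (covT N D c Y) a i u
      = N.delT c (compP N Y a i) u - ∑ b, ∑ j, compP N Y b j u * D.A3 a i b j c u := by
  simp [compP, covT, fromA]; ring

lemma compT_covX (k : Fin n) (Y : E m n → E m n) (a : Fin m) (u : E m n) :
    compT (covX N D k Y) a u = N.delX k (compT Y a) u + ∑ b, compT Y b u * D.H1 a b k u := rfl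

lemma compX_covX (k : Fin n) (Y : E m n → E m n) (i : Fin n) (u : E m n) :
    compX (covX N D k Y) i u = N.delX k (compX Y i) u + ∑ j, compX Y j u * D.H2 i j k u := rfl

lemma compP_covX (k : Fin n) (Y : E m n → E m n) (a : Fin m) (i : Fin n) (u : E m n) :
    compP N (covX N D k Y) a i u
      = N.delX k (compP N Y a i) u - ∑ b, ∑ j, compP N Y b j u * D.H3 a i b j k u := by
  simp [compP, covX, fromA]; ring

lemma compT_covP (c : Fin m) (k : Fin n) (Y : E m n → E m n) (a : Fin m) (u : E m n) :
    compT (covP N D c k Y) a u = delP c k (compT Y a) u + ∑ b, compT Y b u * D.C1 a b c k u := rfl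

lemma compX_covP (c : Fin m) (k : Fin n) (Y : E m n → E m n) (i : Fin n) (u : E m n) :
    compX (covP N D c k Y) i u = delP c k (compX Y i) u + ∑ j, compX Y j u * D.C2 i j c k u := rfl

lemma compP_covP (c : Fin m) (k : Fin n) (Y : E m n → E m n) (a : Fin m) (i : Fin n) (u : E m n) :
    compP N (covP N D c k Y) a i u
      = delP c k (compP N Y a i) u - ∑ b, ∑ j, compP N Y b j u * D.C3 a i b j c k u := by
  simp [compP, covP, fromA]; ring

-- components of the frame fields
lemma compT_dT (c a : Fin m) (u : E m n) : compT (N.dT c) a u = (Pi.single c 1 : Fin m → ℝ) a := rfl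
lemma compX_dT (c : Fin m) (i : Fin n) (u : E m n) : compX (N.dT c) i u = 0 := rfl
lemma compP_dT (c a : Fin m) (i : Fin n) (u : E m n) : compP N (N.dT c) a i u = 0 := by
  simp [compP, NLC.dT, sum_mul_single]

lemma compT_dX (k : Fin n) (a : Fin m) (u : E m n) : compT (N.dX k) a u = 0 := rfl
lemma compX_dX (k i : Fin n) (u : E m n) : compX (N.dX k) i u = (Pi.single k 1 : Fin n → ℝ) i := rfl
lemma compP_dX (k : Fin n) (a : Fin m) (i : Fin n) (u : E m n) : compP N (N.dX k) a i u = 0 := by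
  simp [compP, NLC.dX, sum_mul_single]

lemma compT_dP (c : Fin m) (k : Fin n) (a : Fin m) (u : E m n) :
    compT (dPfield m n c k) a u = 0 := rfl
lemma compX_dP (c : Fin m) (k i : Fin n) (u : E m n) : compX (dPfield m n c k) i u = 0 := rfl
lemma compP_dP (c : Fin m) (k : Fin n) (a : Fin m) (i : Fin n) (u : E m n) :
    compP N (dPfield m n c k) a i u = (Pi.single c (Pi.single k 1) : Fin m → Fin n → ℝ) a i := by
  simp [compP, dPfield, dPnat]


lemma sum_sum_single_smul (c : Fin m) (k : Fin n) (f : Fin m → Fin n → E m n) :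
    (∑ c', ∑ k', (Pi.single c (Pi.single k 1) : Fin m → Fin n → ℝ) c' k' • f c' k') = f c k := by
  simp [Pi.single_apply, ite_apply, apply_ite, ite_smul]

lemma covD_dT (c : Fin m) (Z : E m n → E m n) (u : E m n) :
    covD N D (N.dT c) Z u = covT N D c Z u := by
  simp [covD, compT_dT, compX_dT, compP_dT, sum_single_smul]

lemma covD_dX (k : Fin n) (Z : E m n → E m n) (u : E m n) :
    covD N D (N.dX k) Z u = covX N D k Z u := by
  simp [covD, compT_dX, compX_dX, compP_dX, sum_single_smul]

lemma covD_dP (c : Fin m) (k : Fin n) (Z : E m n → E m n) (u : E m n) :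
    covD N D (dPfield m n c k) Z u = covP N D c k Z u := by
  simp [covD, compT_dP, compX_dP, compP_dP, sum_sum_single_smul]

-- fderiv helpers
lemma fderiv_comp_fst (φ : (Fin m → ℝ) → ℝ) {u : E m n} (hφ : DifferentiableAt ℝ φ u.1)
    (ξ : E m n) : fderiv ℝ (fun v : E m n => φ v.1) u ξ = fderiv ℝ φ u.1 ξ.1 := by
  have h : HasFDerivAt (fun v : E m n => φ v.1) ((fderiv ℝ φ u.1).comp
      (ContinuousLinearMap.fst ℝ (Fin m → ℝ) ((Fin n → ℝ) × (Fin m → Fin n → ℝ)))) u :=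
    hφ.hasFDerivAt.comp u (hasFDerivAt_fst (p := u))
  rw [h.fderiv]; rfl

lemma fderiv_comp_snd_fst (ψ : (Fin n → ℝ) → ℝ) {u : E m n} (hψ : DifferentiableAt ℝ ψ u.2.1)
    (ξ : E m n) : fderiv ℝ (fun v : E m n => ψ v.2.1) u ξ = fderiv ℝ ψ u.2.1 ξ.2.1 := by
  have h2 : HasFDerivAt (fun v : E m n => v.2.1) ((ContinuousLinearMap.fst ℝ (Fin n → ℝ)
      (Fin m → Fin n → ℝ)).comp (ContinuousLinearMap.snd ℝ (Fin m → ℝ)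
      ((Fin n → ℝ) × (Fin m → Fin n → ℝ)))) u :=
    (hasFDerivAt_fst (p := u.2)).comp u (hasFDerivAt_snd (p := u))
  have h : HasFDerivAt (fun v : E m n => ψ v.2.1) ((fderiv ℝ ψ u.2.1).comp
      ((ContinuousLinearMap.fst ℝ (Fin n → ℝ) (Fin m → Fin n → ℝ)).comp
        (ContinuousLinearMap.snd ℝ (Fin m → ℝ) ((Fin n → ℝ) × (Fin m → Fin n → ℝ))))) u :=
    hψ.hasFDerivAt.comp u h2
  rw [h.fderiv]; rfl

lemma delT_tfun (c : Fin m) (φ : (Fin m → ℝ) → ℝ) {u : E m n}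
    (hφ : DifferentiableAt ℝ φ u.1) :
    N.delT c (fun v : E m n => φ v.1) u = fderiv ℝ φ u.1 (Pi.single c 1) := by
  rw [NLC.delT, fderiv_comp_fst φ hφ]; rfl

lemma delX_tfun (k : Fin n) (φ : (Fin m → ℝ) → ℝ) {u : E m n}
    (hφ : DifferentiableAt ℝ φ u.1) :
    N.delX k (fun v : E m n => φ v.1) u = 0 := by
  rw [NLC.delX, fderiv_comp_fst φ hφ]
  show fderiv ℝ φ u.1 0 = 0
  exact (fderiv ℝ φ u.1).map_zero

lemma delP_tfun (c : Fin m) (k : Fin n) (φ : (Fin m → ℝ) → ℝ) {u : E m n}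
    (hφ : DifferentiableAt ℝ φ u.1) :
    delP c k (fun v : E m n => φ v.1) u = 0 := by
  rw [delP, fderiv_comp_fst φ hφ]
  show fderiv ℝ φ u.1 0 = 0
  exact (fderiv ℝ φ u.1).map_zero

lemma delT_xfun (c : Fin m) (ψ : (Fin n → ℝ) → ℝ) {u : E m n}
    (hψ : DifferentiableAt ℝ ψ u.2.1) :
    N.delT c (fun v : E m n => ψ v.2.1) u = 0 := by
  rw [NLC.delT, fderiv_comp_snd_fst ψ hψ]
  show fderiv ℝ ψ u.2.1 0 = 0
  exact (fderiv ℝ ψ u.2.1).map_zero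

lemma delX_xfun (k : Fin n) (ψ : (Fin n → ℝ) → ℝ) {u : E m n}
    (hψ : DifferentiableAt ℝ ψ u.2.1) :
    N.delX k (fun v : E m n => ψ v.2.1) u = fderiv ℝ ψ u.2.1 (Pi.single k 1) := by
  rw [NLC.delX, fderiv_comp_snd_fst ψ hψ]; rfl

lemma delP_xfun (c : Fin m) (k : Fin n) (ψ : (Fin n → ℝ) → ℝ) {u : E m n}
    (hψ : DifferentiableAt ℝ ψ u.2.1) :
    delP c k (fun v : E m n => ψ v.2.1) u = 0 := by
  rw [delP, fderiv_comp_snd_fst ψ hψ]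
  show fderiv ℝ ψ u.2.1 0 = 0
  exact (fderiv ℝ ψ u.2.1).map_zero

-- lie bracket component lemmas
lemma fderiv_fst_apply_eq_zero {Y : E m n → E m n} {u : E m n}
    (hY : DifferentiableAt ℝ Y u) {c : Fin m → ℝ} (hc : ∀ v, (Y v).1 = c) (ξ : E m n) :
    (fderiv ℝ Y u ξ).1 = 0 := by
  have h : HasFDerivAt (fun v => (Y v).1) ((ContinuousLinearMap.fst ℝ (Fin m → ℝ)
      ((Fin n → ℝ) × (Fin m → Fin n → ℝ))).comp (fderiv ℝ Y u)) u :=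
    (hasFDerivAt_fst (p := Y u)).comp u hY.hasFDerivAt
  have heq : (fun v => (Y v).1) = fun _ : E m n => c := funext hc
  rw [heq] at h
  have h0 := (hasFDerivAt_const c u).unique h
  have : (fderiv ℝ Y u ξ).1 = ((ContinuousLinearMap.fst ℝ (Fin m → ℝ)
      ((Fin n → ℝ) × (Fin m → Fin n → ℝ))).comp (fderiv ℝ Y u)) ξ := rfl
  rw [this, ← h0]; rfl

lemma fderiv_snd_fst_apply_eq_zero {Y : E m n → E m n} {u : E m n}
    (hY : DifferentiableAt ℝ Y u) {c : Fin n → ℝ} (hc : ∀ v, (Y v).2.1 = c) (ξ : E m n) :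
    (fderiv ℝ Y u ξ).2.1 = 0 := by
  have h2 : HasFDerivAt (fun v : E m n => (Y v).2.1) ((ContinuousLinearMap.fst ℝ (Fin n → ℝ)
      (Fin m → Fin n → ℝ)).comp ((ContinuousLinearMap.snd ℝ (Fin m → ℝ)
      ((Fin n → ℝ) × (Fin m → Fin n → ℝ))).comp (fderiv ℝ Y u))) u := by
    exact (hasFDerivAt_fst (p := (Y u).2)).comp u
      ((hasFDerivAt_snd (p := Y u)).comp u hY.hasFDerivAt)
  have heq : (fun v => (Y v).2.1) = fun _ : E m n => c := funext hc
  rw [heq] at h2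
  have h0 := (hasFDerivAt_const c u).unique h2
  have : (fderiv ℝ Y u ξ).2.1 = ((ContinuousLinearMap.fst ℝ (Fin n → ℝ)
      (Fin m → Fin n → ℝ)).comp ((ContinuousLinearMap.snd ℝ (Fin m → ℝ)
      ((Fin n → ℝ) × (Fin m → Fin n → ℝ))).comp (fderiv ℝ Y u))) ξ := rfl
  rw [this, ← h0]; rfl

lemma lie_fst {X Y : E m n → E m n} {u : E m n}
    (hX : DifferentiableAt ℝ X u) (hY : DifferentiableAt ℝ Y u)
    {cX cY : Fin m → ℝ} (hcX : ∀ v, (X v).1 = cX) (hcY : ∀ v, (Y v).1 = cY) :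
    (lie X Y u).1 = 0 := by
  show (fderiv ℝ Y u (X u) - fderiv ℝ X u (Y u)).1 = 0
  have : (fderiv ℝ Y u (X u) - fderiv ℝ X u (Y u)).1
      = (fderiv ℝ Y u (X u)).1 - (fderiv ℝ X u (Y u)).1 := rfl
  rw [this, fderiv_fst_apply_eq_zero hY hcY, fderiv_fst_apply_eq_zero hX hcX, sub_zero]

lemma lie_snd_fst {X Y : E m n → E m n} {u : E m n}
    (hX : DifferentiableAt ℝ X u) (hY : DifferentiableAt ℝ Y u)
    {cX cY : Fin n → ℝ} (hcX : ∀ v, (X v).2.1 = cX) (hcY : ∀ v, (Y v).2.1 = cY) :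
    (lie X Y u).2.1 = 0 := by
  show (fderiv ℝ Y u (X u) - fderiv ℝ X u (Y u)).2.1 = 0
  have : (fderiv ℝ Y u (X u) - fderiv ℝ X u (Y u)).2.1
      = (fderiv ℝ Y u (X u)).2.1 - (fderiv ℝ X u (Y u)).2.1 := rfl
  rw [this, fderiv_snd_fst_apply_eq_zero hY hcY, fderiv_snd_fst_apply_eq_zero hX hcX, sub_zero]

lemma covD_lie_eq_zero {X Y Z : E m n → E m n} {u : E m n}
    (h1 : (lie X Y u).1 = 0) (h2 : (lie X Y u).2.1 = 0)
    (hZ : ∀ c k, covP N D c k Z u = 0) :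
    covD N D (lie X Y) Z u = 0 := by
  have hT : ∀ c, compT (lie X Y) c u = 0 := by intro c; rw [compT, h1]; rfl
  have hX2 : ∀ k, compX (lie X Y) k u = 0 := by intro k; rw [compX, h2]; rfl
  simp [covD, hT, hX2, hZ]


@[simp] lemma delT_zero (N : NLC m n) (c : Fin m) (u : E m n) :
    N.delT c (fun _ : E m n => (0:ℝ)) u = 0 := by simp [NLC.delT]
@[simp] lemma delX_zero (N : NLC m n) (k : Fin n) (u : E m n) :
    N.delX k (fun _ : E m n => (0:ℝ)) u = 0 := by simp [NLC.delX]
@[simp] lemma delP_zero (c : Fin m) (k : Fin n) (u : E m n) :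
    delP c k (fun _ : E m n => (0:ℝ)) u = 0 := by simp [delP]

@[simp] lemma my_neg_ite (c : Prop) [Decidable c] (x y : ℝ) :
    -(if c then x else y) = if c then -x else -y := by split <;> rfl

lemma sum_sum_ite_ite {M N : ℕ} (a : Fin M) (i : Fin N) (f : Fin M → Fin N → ℝ) :
    (∑ x, ∑ y, if a = x then if i = y then f x y else 0 else 0) = f a i := by
  have h : ∀ x, (∑ y, if a = x then if i = y then f x y else 0 else 0)
      = if a = x then f x i else 0 := by
    intro x
    split_ifs with hh
    · simp [Finset.sum_ite_eq]
    · simp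
  simp [h, Finset.sum_ite_eq]

lemma sum_mul_single' {N : ℕ} (a : Fin N) (g : Fin N → ℝ) :
    (∑ b, g b * (Pi.single b 1 : Fin N → ℝ) a) = g a := by
  simp [Pi.single_apply, Finset.sum_ite_eq]

lemma sum_sum_single_mul (c : Fin m) (k : Fin n) (g : Fin m → Fin n → ℝ) :
    (∑ c', ∑ k', (Pi.single c (Pi.single k 1) : Fin m → Fin n → ℝ) c' k' * g c' k') = g c k := by
  simp [Pi.single_apply, ite_apply, apply_ite, ite_mul]

lemma fromA_eq_zero (ft : Fin m → ℝ) (fx : Fin n → ℝ) (fp : Fin m → Fin n → ℝ) (u : E m n)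
    (h1 : ∀ a, ft a = 0) (h2 : ∀ i, fx i = 0) (h3 : ∀ a i, fp a i = 0) :
    fromA N ft fx fp u = 0 := by
  rw [fromA]
  refine Prod.ext ?_ (Prod.ext ?_ ?_)
  · funext a; simpa using h1 a
  · funext i; simpa using h2 i
  · funext a i; simp [h1, h2, h3]

lemma compP_zero_fun (a : Fin m) (i : Fin n) :
    compP N (fun _ => (0 : E m n)) a i = fun _ => (0:ℝ) := by
  funext u; simp [compP]

lemma covT_zero (c : Fin m) (u : E m n) : covT N D c (fun _ => (0 : E m n)) u = 0 := by
  rw [covT]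
  refine fromA_eq_zero N _ _ _ u ?_ ?_ ?_
  · intro a
    have h : compT (fun _ => (0 : E m n)) a = fun _ : E m n => (0:ℝ) := rfl
    simp [h, NLC.delT, compT]
  · intro i
    have h : compX (fun _ => (0 : E m n)) i = fun _ : E m n => (0:ℝ) := rfl
    simp [h, NLC.delT, compX]
  · intro a i
    simp [compP_zero_fun, NLC.delT]

lemma covX_zero (k : Fin n) (u : E m n) : covX N D k (fun _ => (0 : E m n)) u = 0 := by
  rw [covX]
  refine fromA_eq_zero N _ _ _ u ?_ ?_ ?_
  · intro a
    have h : compT (fun _ => (0 : E m n)) a = fun _ : E m n => (0:ℝ) := rfl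
    simp [h, NLC.delX, compT]
  · intro i
    have h : compX (fun _ => (0 : E m n)) i = fun _ : E m n => (0:ℝ) := rfl
    simp [h, NLC.delX, compX]
  · intro a i
    simp [compP_zero_fun, NLC.delX]

lemma covP_zero (c : Fin m) (k : Fin n) (u : E m n) :
    covP N D c k (fun _ => (0 : E m n)) u = 0 := by
  rw [covP]
  refine fromA_eq_zero N _ _ _ u ?_ ?_ ?_
  · intro a
    have h : compT (fun _ => (0 : E m n)) a = fun _ : E m n => (0:ℝ) := rfl
    simp [h, delP, compT]
  · intro i
    have h : compX (fun _ => (0 : E m n)) i = fun _ : E m n => (0:ℝ) := rfl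
    simp [h, delP, compX]
  · intro a i
    simp [compP_zero_fun, delP]

lemma covD_dT_fun (c : Fin m) (Z : E m n → E m n) : covD N D (N.dT c) Z = covT N D c Z :=
  funext fun u => covD_dT N D c Z u
lemma covD_dX_fun (k : Fin n) (Z : E m n → E m n) : covD N D (N.dX k) Z = covX N D k Z :=
  funext fun u => covD_dX N D k Z u
lemma covD_dP_fun (c : Fin m) (k : Fin n) (Z : E m n → E m n) :
    covD N D (dPfield m n c k) Z = covP N D c k Z :=
  funext fun u => covD_dP N D c k Z u

end Aux

section Ber
open scoped BigOperators
variable {m n : ℕ} (χ : Fin m → Fin m → Fin m → (Fin m → ℝ) → ℝ)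
  (Γ : Fin n → Fin n → Fin n → (Fin n → ℝ) → ℝ)

lemma compP_dT_fun (c a : Fin m) (i : Fin n) :
    compP (berN χ Γ) ((berN χ Γ).dT c) a i = fun _ : E m n => (0:ℝ) :=
  funext fun u => compP_dT _ c a i u

lemma compP_dX_fun (k : Fin n) (a : Fin m) (i : Fin n) :
    compP (berN χ Γ) ((berN χ Γ).dX k) a i = fun _ : E m n => (0:ℝ) :=
  funext fun u => compP_dX _ k a i u

lemma compP_dP_fun (c : Fin m) (k : Fin n) (a : Fin m) (i : Fin n) :
    compP (berN χ Γ) (dPfield m n c k) a i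
      = fun _ : E m n => (Pi.single c (Pi.single k 1) : Fin m → Fin n → ℝ) a i :=
  funext fun u => compP_dP _ c k a i u

lemma diff_p22 (c : Fin m) (i : Fin n) (u : E m n) :
    DifferentiableAt ℝ (fun v : E m n => v.2.2 c i) u :=
  differentiableAt_pi.1 (differentiableAt_pi.1 (differentiableAt_snd.snd) c) i

lemma diff_p21 (i : Fin n) (u : E m n) :
    DifferentiableAt ℝ (fun v : E m n => v.2.1 i) u :=
  differentiableAt_pi.1 (differentiableAt_snd.fst) i

lemma diff_dT {u : E m n} (b : Fin m)
    (hχd : ∀ a b c, DifferentiableAt ℝ (χ a b c) u.1) :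
    DifferentiableAt ℝ ((berN χ Γ).dT b) u := by
  unfold NLC.dT
  refine (differentiableAt_const _).prodMk ((differentiableAt_const _).prodMk ?_)
  refine differentiableAt_pi.2 fun a => differentiableAt_pi.2 fun i => ?_
  simp only [berN]
  exact (DifferentiableAt.fun_sum fun c _ =>
    (((hχd a c b).comp u differentiableAt_fst).mul (diff_p22 c i u))).neg

lemma diff_dX {u : E m n} (j : Fin n)
    (hΓd : ∀ i j k, DifferentiableAt ℝ (Γ i j k) u.2.1) :
    DifferentiableAt ℝ ((berN χ Γ).dX j) u := by
  unfold NLC.dX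
  refine (differentiableAt_const _).prodMk ((differentiableAt_const _).prodMk ?_)
  refine differentiableAt_pi.2 fun a => differentiableAt_pi.2 fun i => ?_
  simp only [berN]
  refine DifferentiableAt.neg ?_
  refine DifferentiableAt.neg ?_
  exact DifferentiableAt.fun_sum fun k _ =>
    (((hΓd k i j).comp u (differentiableAt_snd.fst)).mul (diff_p22 a k u))

lemma diff_dP (c : Fin m) (k : Fin n) (u : E m n) :
    DifferentiableAt ℝ (dPfield m n c k) u := differentiableAt_const _


-- abbreviations used below (written out每次): N = berN χ Γ, D = berD χ Γ

@[simp] lemma berD_A1 (a b c : Fin m) (u : E m n) : (berD (n := n) χ Γ).A1 a b c u = χ a b c u.1 := rfl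
@[simp] lemma berD_A2 (i j : Fin n) (c : Fin m) (u : E m n) : (berD χ Γ).A2 i j c u = 0 := rfl
@[simp] lemma berD_A3 (a : Fin m) (i : Fin n) (b : Fin m) (j : Fin n) (c : Fin m) (u : E m n) :
    (berD χ Γ).A3 a i b j c u = -((if j = i then (1:ℝ) else 0) * χ a b c u.1) := rfl
@[simp] lemma berD_H1 (a b : Fin m) (k : Fin n) (u : E m n) : (berD χ Γ).H1 a b k u = 0 := rfl
@[simp] lemma berD_H2 (i j k : Fin n) (u : E m n) : (berD (m := m) χ Γ).H2 i j k u = Γ i j k u.2.1 := rfl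
@[simp] lemma berD_H3 (a : Fin m) (i : Fin n) (b : Fin m) (j k : Fin n) (u : E m n) :
    (berD χ Γ).H3 a i b j k u = (if a = b then (1:ℝ) else 0) * Γ j i k u.2.1 := rfl
@[simp] lemma berD_C1 (a b c : Fin m) (k : Fin n) (u : E m n) : (berD χ Γ).C1 a b c k u = 0 := rfl
@[simp] lemma berD_C2 (i j : Fin n) (c : Fin m) (k : Fin n) (u : E m n) : (berD χ Γ).C2 i j c k u = 0 := rfl
@[simp] lemma berD_C3 (a : Fin m) (i : Fin n) (b : Fin m) (j : Fin n) (c : Fin m) (k : Fin n) (u : E m n) :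
    (berD χ Γ).C3 a i b j c k u = 0 := rfl

-- constant-component helper rfl lemmas
lemma compT_dT_fun (c a : Fin m) :
    compT ((berN χ Γ).dT c) a = fun _ : E m n => (Pi.single c 1 : Fin m → ℝ) a := rfl
lemma compX_dT_fun (c : Fin m) (i : Fin n) :
    compX ((berN χ Γ).dT c) i = fun _ : E m n => (0:ℝ) := rfl
lemma compT_dX_fun (k : Fin n) (a : Fin m) :
    compT ((berN χ Γ).dX k) a = fun _ : E m n => (0:ℝ) := rfl
lemma compX_dX_fun (k i : Fin n) :
    compX ((berN χ Γ).dX k) i = fun _ : E m n => (Pi.single k 1 : Fin n → ℝ) i := rfl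
lemma compT_dP_fun (c : Fin m) (k : Fin n) (a : Fin m) :
    compT (dPfield m n c k) a = fun _ : E m n => (0:ℝ) := rfl
lemma compX_dP_fun (c : Fin m) (k : Fin n) (i : Fin n) :
    compX (dPfield m n c k) i = fun _ : E m n => (0:ℝ) := rfl

-- components of covT b (dT a)
lemma ct_dT_T (b a f : Fin m) :
    compT (covT (berN χ Γ) (berD χ Γ) b ((berN χ Γ).dT a)) f = fun v => χ f a b v.1 := by
  funext v
  rw [compT_covT, compT_dT_fun]
  simp [NLC.delT, compT_dT, berD, sum_single_mul]

lemma ct_dT_X (b a : Fin m) (i : Fin n) :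
    compX (covT (berN χ Γ) (berD χ Γ) b ((berN χ Γ).dT a)) i = fun _ => (0:ℝ) := by
  funext v
  rw [compX_covT, compX_dT_fun]
  simp [NLC.delT, compX_dT, berD]

lemma ct_dT_P (b a : Fin m) (a' : Fin m) (i' : Fin n) :
    compP (berN χ Γ) (covT (berN χ Γ) (berD χ Γ) b ((berN χ Γ).dT a)) a' i'
      = fun _ => (0:ℝ) := by
  funext v
  rw [compP_covT]
  simp [compP_dT_fun, NLC.delT]

-- covT b (dX i) is the zero field
lemma ct_dX_zero (b : Fin m) (i : Fin n) :
    covT (berN χ Γ) (berD χ Γ) b ((berN χ Γ).dX i) = fun _ => (0 : E m n) := by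
  funext u
  rw [covT]
  refine fromA_eq_zero _ _ _ _ u ?_ ?_ ?_
  · intro a; rw [compT_dX_fun]; simp [NLC.delT, compT_dX, berD]
  · intro l; rw [compX_dX_fun]; simp [NLC.delT, compX_dX, berD]
  · intro a i'; simp [compP_covT, compP_dX_fun, NLC.delT]

-- components of covT b (dP a₀ i₀)
lemma ct_dP_T (b : Fin m) (a₀ : Fin m) (i₀ : Fin n) (f : Fin m) :
    compT (covT (berN χ Γ) (berD χ Γ) b (dPfield m n a₀ i₀)) f = fun _ => (0:ℝ) := by
  funext v
  rw [compT_covT, compT_dP_fun]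
  simp [NLC.delT, compT_dP, berD]

lemma ct_dP_X (b : Fin m) (a₀ : Fin m) (i₀ : Fin n) (i : Fin n) :
    compX (covT (berN χ Γ) (berD χ Γ) b (dPfield m n a₀ i₀)) i = fun _ => (0:ℝ) := by
  funext v
  rw [compX_covT, compX_dP_fun]
  simp [NLC.delT, compX_dP, berD]

lemma ct_dP_P (b : Fin m) (a₀ : Fin m) (i₀ : Fin n) (a : Fin m) (i : Fin n) :
    compP (berN χ Γ) (covT (berN χ Γ) (berD χ Γ) b (dPfield m n a₀ i₀)) a i
      = fun v => (if i₀ = i then (1:ℝ) else 0) * χ a a₀ b v.1 := by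
  funext v
  rw [compP_covT]
  simp only [compP_dP_fun, NLC.delT]
  rw [fderiv_fun_const]
  simp [sum_sum_single_mul, berD]
  simp [Pi.single_apply, ite_apply, apply_ite, ite_mul, eq_comm]
  split <;> simp_all

-- covX k (dT a) is the zero field
lemma cx_dT_zero (k : Fin n) (a : Fin m) :
    covX (berN χ Γ) (berD χ Γ) k ((berN χ Γ).dT a) = fun _ => (0 : E m n) := by
  funext u
  rw [covX]
  refine fromA_eq_zero _ _ _ _ u ?_ ?_ ?_
  · intro a'; rw [compT_dT_fun]; simp [NLC.delX, compT_dT, berD]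
  · intro l; rw [compX_dT_fun]; simp [NLC.delX, compX_dT, berD]
  · intro a' i'; simp [compP_covX, compP_dT_fun, NLC.delX]

-- components of covX k (dX i)
lemma cx_dX_T (k i : Fin n) (f : Fin m) :
    compT (covX (berN χ Γ) (berD χ Γ) k ((berN χ Γ).dX i)) f = fun _ => (0:ℝ) := by
  funext v
  rw [compT_covX, compT_dX_fun]
  simp [NLC.delX, compT_dX, berD]

lemma cx_dX_X (k i : Fin n) (l : Fin n) :
    compX (covX (berN χ Γ) (berD χ Γ) k ((berN χ Γ).dX i)) l = fun v => Γ l i k v.2.1 := by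
  funext v
  rw [compX_covX, compX_dX_fun]
  simp [NLC.delX, compX_dX, berD, sum_single_mul]

lemma cx_dX_P (k i : Fin n) (a : Fin m) (i' : Fin n) :
    compP (berN χ Γ) (covX (berN χ Γ) (berD χ Γ) k ((berN χ Γ).dX i)) a i'
      = fun _ => (0:ℝ) := by
  funext v
  rw [compP_covX]
  simp [compP_dX_fun, NLC.delX]

-- components of covX k (dP a₀ i₀)
lemma cx_dP_T (k : Fin n) (a₀ : Fin m) (i₀ : Fin n) (f : Fin m) :
    compT (covX (berN χ Γ) (berD χ Γ) k (dPfield m n a₀ i₀)) f = fun _ => (0:ℝ) := by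
  funext v
  rw [compT_covX, compT_dP_fun]
  simp [NLC.delX, compT_dP, berD]

lemma cx_dP_X (k : Fin n) (a₀ : Fin m) (i₀ : Fin n) (i : Fin n) :
    compX (covX (berN χ Γ) (berD χ Γ) k (dPfield m n a₀ i₀)) i = fun _ => (0:ℝ) := by
  funext v
  rw [compX_covX, compX_dP_fun]
  simp [NLC.delX, compX_dP, berD]

lemma cx_dP_P (k : Fin n) (a₀ : Fin m) (i₀ : Fin n) (a : Fin m) (i : Fin n) :
    compP (berN χ Γ) (covX (berN χ Γ) (berD χ Γ) k (dPfield m n a₀ i₀)) a i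
      = fun v => -((if a = a₀ then (1:ℝ) else 0) * Γ i₀ i k v.2.1) := by
  funext v
  rw [compP_covX]
  simp only [compP_dP_fun, NLC.delX]
  rw [fderiv_fun_const]
  simp [sum_sum_single_mul, berD]
  simp [Pi.single_apply, ite_apply, apply_ite, ite_mul, eq_comm]
  split <;> simp_all

-- covP of frame fields is the zero field
lemma covP_dT_zero (c : Fin m) (k : Fin n) (a : Fin m) :
    covP (berN χ Γ) (berD χ Γ) c k ((berN χ Γ).dT a) = fun _ => (0 : E m n) := by
  funext u
  rw [covP]
  refine fromA_eq_zero _ _ _ _ u ?_ ?_ ?_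
  · intro a'; rw [compT_dT_fun]; simp [delP, compT_dT, berD]
  · intro l; rw [compX_dT_fun]; simp [delP, compX_dT, berD]
  · intro a' i'; simp [compP_covP, compP_dT_fun, delP, berD]

lemma covP_dX_zero (c : Fin m) (k : Fin n) (i : Fin n) :
    covP (berN χ Γ) (berD χ Γ) c k ((berN χ Γ).dX i) = fun _ => (0 : E m n) := by
  funext u
  rw [covP]
  refine fromA_eq_zero _ _ _ _ u ?_ ?_ ?_
  · intro a'; rw [compT_dX_fun]; simp [delP, compT_dX, berD]
  · intro l; rw [compX_dX_fun]; simp [delP, compX_dX, berD]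
  · intro a' i'; simp [compP_covP, compP_dX_fun, delP, berD]

lemma covP_dP_zero (c : Fin m) (k : Fin n) (a : Fin m) (i : Fin n) :
    covP (berN χ Γ) (berD χ Γ) c k (dPfield m n a i) = fun _ => (0 : E m n) := by
  funext u
  rw [covP]
  refine fromA_eq_zero _ _ _ _ u ?_ ?_ ?_
  · intro a'; rw [compT_dP_fun]; simp [delP, compT_dP, berD]
  · intro l; rw [compX_dP_fun]; simp [delP, compX_dP, berD]
  · intro a' i'
    simp only [compP_dP_fun, delP]
    rw [fderiv_fun_const]
    simp [berD]

end Ber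

section Cases
open scoped BigOperators
variable {m n : ℕ} (χ : Fin m → Fin m → Fin m → (Fin m → ℝ) → ℝ)
  (Γ : Fin n → Fin n → Fin n → (Fin n → ℝ) → ℝ)

lemma covP_pt_dT (c : Fin m) (k : Fin n) (a : Fin m) (u : E m n) :
    covP (berN χ Γ) (berD χ Γ) c k ((berN χ Γ).dT a) u = 0 :=
  congrFun (covP_dT_zero χ Γ c k a) u
lemma covP_pt_dX (c : Fin m) (k : Fin n) (i : Fin n) (u : E m n) :
    covP (berN χ Γ) (berD χ Γ) c k ((berN χ Γ).dX i) u = 0 :=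
  congrFun (covP_dX_zero χ Γ c k i) u
lemma covP_pt_dP (c : Fin m) (k : Fin n) (a : Fin m) (i : Fin n) (u : E m n) :
    covP (berN χ Γ) (berD χ Γ) c k (dPfield m n a i) u = 0 :=
  congrFun (covP_dP_zero χ Γ c k a i) u

lemma ber_lie_zero {u : E m n} {X Y Z : E m n → E m n}
    (hX : DifferentiableAt ℝ X u) (hY : DifferentiableAt ℝ Y u)
    {cX1 cY1 : Fin m → ℝ} (hX1 : ∀ v, (X v).1 = cX1) (hY1 : ∀ v, (Y v).1 = cY1)
    {cX2 cY2 : Fin n → ℝ} (hX2 : ∀ v, (X v).2.1 = cX2) (hY2 : ∀ v, (Y v).2.1 = cY2)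
    (hZ : ∀ c k, covP (berN χ Γ) (berD χ Γ) c k Z u = 0) :
    covD (berN χ Γ) (berD χ Γ) (lie X Y) Z u = 0 :=
  covD_lie_eq_zero _ _ (lie_fst hX hY hX1 hY1) (lie_snd_fst hX hY hX2 hY2) hZ

-- Case 1:
lemma case1 {u : E m n} (hχd : ∀ a b c, DifferentiableAt ℝ (χ a b c) u.1)
    (hΓd : ∀ i j k, DifferentiableAt ℝ (Γ i j k) u.2.1) (a b c : Fin m) :
    curvR (berN χ Γ) (berD χ Γ) ((berN χ Γ).dT c) ((berN χ Γ).dT b) ((berN χ Γ).dT a) u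
      = ∑ d, kapC χ d a b c u.1 • (berN χ Γ).dT d u := by
  have hdel : ∀ (f a' b' c' : Fin m), (berN χ Γ).delT c' (fun v : E m n => χ f a' b' v.1) u
      = fderiv ℝ (χ f a' b') u.1 (Pi.single c' 1) :=
    fun f a' b' c' => delT_tfun _ _ _ (hχd f a' b')
  rw [curvR]
  simp only [covD_dT_fun]
  rw [
    ber_lie_zero χ Γ (diff_dT χ Γ c hχd) (diff_dT χ Γ b hχd)
      (fun _ => rfl) (fun _ => rfl) (fun _ => rfl) (fun _ => rfl)
      (fun c' k' => covP_pt_dT χ Γ c' k' a u), sub_zero]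
  refine Prod.ext ?_ (Prod.ext ?_ ?_)
  · funext f
    simp only [Prod.fst_sub, Pi.sub_apply, covT, fromA, Prod.fst_sum, Finset.sum_apply,
      Prod.smul_fst, Pi.smul_apply, smul_eq_mul, NLC.dT,
      ct_dT_T, ct_dT_X, ct_dT_P, hdel, berD_A1, berD_A2, berD_A3,
      sum_mul_single, sum_mul_single', kapC, delT_zero]
    ring
  · funext i
    simp only [Prod.snd_sub, Prod.fst_sub, Pi.sub_apply, covT, fromA, Prod.snd_sum,
      Prod.fst_sum, Finset.sum_apply, Prod.smul_snd, Prod.smul_fst, Pi.smul_apply,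
      smul_eq_mul, NLC.dT, ct_dT_T, ct_dT_X, ct_dT_P, hdel, berD_A1, berD_A2, berD_A3,
      delT_zero]
    simp
  · funext a' i'
    simp only [Prod.snd_sub, Pi.sub_apply, covT, fromA, Prod.snd_sum, Finset.sum_apply,
      Prod.smul_snd, Pi.smul_apply, smul_eq_mul, NLC.dT,
      ct_dT_T, ct_dT_X, ct_dT_P, hdel, berD_A1, berD_A2, berD_A3, delT_zero]
    have key : ∀ d, kapC χ d a b c u.1 * (-((berN χ Γ).N1 a' i' d u))
        = (berN χ Γ).N1 a' i' d u * (fderiv ℝ (χ d a c) u.1 (Pi.single b 1)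
            + ∑ e, χ e a c u.1 * χ d e b u.1)
          - (berN χ Γ).N1 a' i' d u * (fderiv ℝ (χ d a b) u.1 (Pi.single c 1)
            + ∑ e, χ e a b u.1 * χ d e c u.1) := by
      intro d; simp only [kapC]; ring
    rw [Finset.sum_congr rfl (fun d _ => key d), Finset.sum_sub_distrib]
    simp
    ring

-- Case 2:
lemma case2 {u : E m n} (hχd : ∀ a b c, DifferentiableAt ℝ (χ a b c) u.1)
    (hΓd : ∀ i j k, DifferentiableAt ℝ (Γ i j k) u.2.1) (a b c : Fin m) (i : Fin n) :
    curvR (berN χ Γ) (berD χ Γ) ((berN χ Γ).dT c) ((berN χ Γ).dT b) (dPfield m n a i) u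
      = ∑ d, kapC χ d a b c u.1 • dPnat m n d i := by
  have hdel2 : ∀ (f a₁ b₁ c₁ : Fin m) (r : ℝ),
      (berN χ Γ).delT c₁ (fun v : E m n => r * χ f a₁ b₁ v.1) u
        = r * fderiv ℝ (χ f a₁ b₁) u.1 (Pi.single c₁ 1) := by
    intro f a₁ b₁ c₁ r
    rw [delT_tfun _ _ _ ((hχd f a₁ b₁).const_mul r), fderiv_const_mul (hχd f a₁ b₁)]
    simp
  rw [curvR]
  simp only [covD_dT_fun]
  rw [
    ber_lie_zero χ Γ (diff_dT χ Γ c hχd) (diff_dT χ Γ b hχd)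
      (fun _ => rfl) (fun _ => rfl) (fun _ => rfl) (fun _ => rfl)
      (fun c' k' => covP_pt_dP χ Γ c' k' a i u), sub_zero]
  refine Prod.ext ?_ (Prod.ext ?_ ?_)
  · funext f
    simp only [Prod.fst_sub, Pi.sub_apply, covT, fromA, Prod.fst_sum, Finset.sum_apply,
      Prod.smul_fst, Pi.smul_apply, smul_eq_mul, dPnat,
      ct_dP_T, ct_dP_X, ct_dP_P, berD_A1, berD_A2, berD_A3, delT_zero]
    simp
  · funext l
    simp only [Prod.snd_sub, Prod.fst_sub, Pi.sub_apply, covT, fromA, Prod.snd_sum,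
      Prod.fst_sum, Finset.sum_apply, Prod.smul_snd, Prod.smul_fst, Pi.smul_apply,
      smul_eq_mul, dPnat, ct_dP_T, ct_dP_X, ct_dP_P, berD_A1, berD_A2, berD_A3, delT_zero]
    simp
  · funext a' i'
    simp only [Prod.snd_sub, Pi.sub_apply, covT, fromA, Prod.snd_sum, Finset.sum_apply,
      Prod.smul_snd, Pi.smul_apply, smul_eq_mul, dPnat,
      ct_dP_T, ct_dP_X, ct_dP_P, hdel2, berD_A1, berD_A2, berD_A3, delT_zero]
    simp only [mul_ite, ite_mul, zero_mul, mul_zero, mul_one, one_mul, neg_mul, mul_neg,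
      neg_neg, Finset.sum_ite_eq, Finset.sum_ite_eq', Finset.mem_univ, if_true,
      Finset.sum_neg_distrib, Pi.single_apply, ite_apply, apply_ite, Pi.zero_apply,
      Finset.sum_const_zero, mul_zero, add_zero, zero_add, sub_zero, zero_sub, kapC]
    simp only [neg_zero, neg_neg, Finset.sum_ite_eq', Finset.mem_univ, if_true, eq_comm]
    split_ifs with h <;>
      simp_all [Finset.sum_ite_eq, Finset.sum_ite_eq', Finset.sum_neg_distrib] <;>
      ring

-- Case 3:
lemma case3 {u : E m n} (hχd : ∀ a b c, DifferentiableAt ℝ (χ a b c) u.1)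
    (hΓd : ∀ i j k, DifferentiableAt ℝ (Γ i j k) u.2.1) (i j k : Fin n) :
    curvR (berN χ Γ) (berD χ Γ) ((berN χ Γ).dX k) ((berN χ Γ).dX j) ((berN χ Γ).dX i) u
      = ∑ l, rC Γ l i j k u.2.1 • (berN χ Γ).dX l u := by
  have hdel : ∀ (l i' j' k' : Fin n), (berN χ Γ).delX k' (fun v : E m n => Γ l i' j' v.2.1) u
      = fderiv ℝ (Γ l i' j') u.2.1 (Pi.single k' 1) :=
    fun l i' j' k' => delX_xfun _ _ _ (hΓd l i' j')
  rw [curvR]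
  simp only [covD_dX_fun]
  rw [ber_lie_zero χ Γ (diff_dX χ Γ k hΓd) (diff_dX χ Γ j hΓd)
      (fun _ => rfl) (fun _ => rfl) (fun _ => rfl) (fun _ => rfl)
      (fun c' k' => covP_pt_dX χ Γ c' k' i u), sub_zero]
  refine Prod.ext ?_ (Prod.ext ?_ ?_)
  · funext f
    simp only [Prod.fst_sub, Pi.sub_apply, covX, fromA, Prod.fst_sum, Finset.sum_apply,
      Prod.smul_fst, Pi.smul_apply, smul_eq_mul, NLC.dX,
      cx_dX_T, cx_dX_X, cx_dX_P, hdel, berD_H1, berD_H2, berD_H3, delX_zero]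
    simp
  · funext l
    simp only [Prod.snd_sub, Prod.fst_sub, Pi.sub_apply, covX, fromA, Prod.snd_sum,
      Prod.fst_sum, Finset.sum_apply, Prod.smul_snd, Prod.smul_fst, Pi.smul_apply,
      smul_eq_mul, NLC.dX, cx_dX_T, cx_dX_X, cx_dX_P, hdel, berD_H1, berD_H2, berD_H3,
      sum_mul_single, sum_mul_single', rC, delX_zero]
    ring
  · funext a' i'
    simp only [Prod.snd_sub, Pi.sub_apply, covX, fromA, Prod.snd_sum, Finset.sum_apply,
      Prod.smul_snd, Pi.smul_apply, smul_eq_mul, NLC.dX,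
      cx_dX_T, cx_dX_X, cx_dX_P, hdel, berD_H1, berD_H2, berD_H3, delX_zero]
    have key : ∀ l, rC Γ l i j k u.2.1 * (-((berN χ Γ).N2 a' i' l u))
        = (berN χ Γ).N2 a' i' l u * (fderiv ℝ (Γ l i k) u.2.1 (Pi.single j 1)
            + ∑ r, Γ r i k u.2.1 * Γ l r j u.2.1)
          - (berN χ Γ).N2 a' i' l u * (fderiv ℝ (Γ l i j) u.2.1 (Pi.single k 1)
            + ∑ r, Γ r i j u.2.1 * Γ l r k u.2.1) := by
      intro l; simp only [rC]; ring
    rw [Finset.sum_congr rfl (fun l _ => key l), Finset.sum_sub_distrib]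
    simp
    ring

-- Case 4:
lemma case4 {u : E m n} (hχd : ∀ a b c, DifferentiableAt ℝ (χ a b c) u.1)
    (hΓd : ∀ i j k, DifferentiableAt ℝ (Γ i j k) u.2.1) (a : Fin m) (i j k : Fin n) :
    curvR (berN χ Γ) (berD χ Γ) ((berN χ Γ).dX k) ((berN χ Γ).dX j) (dPfield m n a i) u
      = ∑ l, (-(rC Γ i l j k u.2.1)) • dPnat m n a l := by
  have hdel2 : ∀ (s r₁ j₁ k₁ : Fin n) (r : ℝ),
      (berN χ Γ).delX k₁ (fun v : E m n => -(r * Γ s r₁ j₁ v.2.1)) u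
        = -(r * fderiv ℝ (Γ s r₁ j₁) u.2.1 (Pi.single k₁ 1)) := by
    intro s r₁ j₁ k₁ r
    rw [delX_xfun _ _ (ψ := fun x => -(r * Γ s r₁ j₁ x)) (((hΓd s r₁ j₁).const_mul r).neg)]
    rw [show (fun x => -(r * Γ s r₁ j₁ x)) = fun x => -(r * Γ s r₁ j₁ x) from rfl]
    rw [fderiv_fun_neg, fderiv_const_mul (hΓd s r₁ j₁)]
    simp
  rw [curvR]
  simp only [covD_dX_fun]
  rw [ber_lie_zero χ Γ (diff_dX χ Γ k hΓd) (diff_dX χ Γ j hΓd)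
      (fun _ => rfl) (fun _ => rfl) (fun _ => rfl) (fun _ => rfl)
      (fun c' k' => covP_pt_dP χ Γ c' k' a i u), sub_zero]
  refine Prod.ext ?_ (Prod.ext ?_ ?_)
  · funext f
    simp only [Prod.fst_sub, Pi.sub_apply, covX, fromA, Prod.fst_sum, Finset.sum_apply,
      Prod.smul_fst, Pi.smul_apply, smul_eq_mul, dPnat,
      cx_dP_T, cx_dP_X, cx_dP_P, berD_H1, berD_H2, berD_H3, delX_zero]
    simp
  · funext l
    simp only [Prod.snd_sub, Prod.fst_sub, Pi.sub_apply, covX, fromA, Prod.snd_sum,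
      Prod.fst_sum, Finset.sum_apply, Prod.smul_snd, Prod.smul_fst, Pi.smul_apply,
      smul_eq_mul, dPnat, cx_dP_T, cx_dP_X, cx_dP_P, berD_H1, berD_H2, berD_H3, delX_zero]
    simp
  · funext a' i'
    simp only [Prod.snd_sub, Pi.sub_apply, covX, fromA, Prod.snd_sum, Finset.sum_apply,
      Prod.smul_snd, Pi.smul_apply, smul_eq_mul, dPnat,
      cx_dP_T, cx_dP_X, cx_dP_P, hdel2, berD_H1, berD_H2, berD_H3, delX_zero]
    simp only [mul_ite, ite_mul, zero_mul, mul_zero, mul_one, one_mul, neg_mul, mul_neg,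
      neg_neg, Finset.sum_ite_eq, Finset.sum_ite_eq', Finset.mem_univ, if_true,
      Pi.single_apply, ite_apply, apply_ite, Pi.zero_apply,
      Finset.sum_const_zero, add_zero, zero_add, sub_zero, zero_sub, rC]
    simp only [neg_zero, neg_neg, Finset.sum_ite_eq, Finset.sum_ite_eq', Finset.mem_univ,
      if_true, eq_comm]
    split_ifs with h <;>
      simp_all [Finset.sum_ite_eq, Finset.sum_ite_eq', Finset.sum_neg_distrib, mul_comm] <;>
      ring

-- Case 5:
lemma case5 {u : E m n} (hχd : ∀ a b c, DifferentiableAt ℝ (χ a b c) u.1)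
    (hΓd : ∀ i j k, DifferentiableAt ℝ (Γ i j k) u.2.1) (b c : Fin m) (i : Fin n) :
    curvR (berN χ Γ) (berD χ Γ) ((berN χ Γ).dT c) ((berN χ Γ).dT b) ((berN χ Γ).dX i) u
      = 0 := by
  rw [curvR]
  simp only [covD_dT_fun]
  rw [ber_lie_zero χ Γ (diff_dT χ Γ c hχd) (diff_dT χ Γ b hχd)
      (fun _ => rfl) (fun _ => rfl) (fun _ => rfl) (fun _ => rfl)
      (fun c' k' => covP_pt_dX χ Γ c' k' i u), sub_zero,
    ct_dX_zero χ Γ b i, ct_dX_zero χ Γ c i, covT_zero, covT_zero, sub_self]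

-- Case 6:
lemma case6 {u : E m n} (hχd : ∀ a b c, DifferentiableAt ℝ (χ a b c) u.1)
    (hΓd : ∀ i j k, DifferentiableAt ℝ (Γ i j k) u.2.1) (a : Fin m) (j k : Fin n) :
    curvR (berN χ Γ) (berD χ Γ) ((berN χ Γ).dX k) ((berN χ Γ).dX j) ((berN χ Γ).dT a) u
      = 0 := by
  rw [curvR]
  simp only [covD_dX_fun]
  rw [ber_lie_zero χ Γ (diff_dX χ Γ k hΓd) (diff_dX χ Γ j hΓd)
      (fun _ => rfl) (fun _ => rfl) (fun _ => rfl) (fun _ => rfl)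
      (fun c' k' => covP_pt_dT χ Γ c' k' a u), sub_zero,
    cx_dT_zero χ Γ j a, cx_dT_zero χ Γ k a, covX_zero, covX_zero, sub_self]

-- Case 7:
lemma case7 {u : E m n} (hχd : ∀ a b c, DifferentiableAt ℝ (χ a b c) u.1)
    (hΓd : ∀ i j k, DifferentiableAt ℝ (Γ i j k) u.2.1) (a b : Fin m) (k : Fin n) :
    curvR (berN χ Γ) (berD χ Γ) ((berN χ Γ).dX k) ((berN χ Γ).dT b) ((berN χ Γ).dT a) u
      = 0 := by
  have hzX : ∀ (f a₁ b₁ : Fin m), (berN χ Γ).delX k (fun v : E m n => χ f a₁ b₁ v.1) u = 0 :=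
    fun f a₁ b₁ => delX_tfun _ _ _ (hχd f a₁ b₁)
  rw [curvR]
  simp only [covD_dX_fun, covD_dT_fun]
  rw [ber_lie_zero χ Γ (diff_dX χ Γ k hΓd) (diff_dT χ Γ b hχd)
      (fun _ => rfl) (fun _ => rfl) (fun _ => rfl) (fun _ => rfl)
      (fun c' k' => covP_pt_dT χ Γ c' k' a u), sub_zero,
    cx_dT_zero χ Γ k a, covT_zero]
  have h1 : covX (berN χ Γ) (berD χ Γ) k (covT (berN χ Γ) (berD χ Γ) b ((berN χ Γ).dT a)) u
      = 0 := by
    rw [covX]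
    refine fromA_eq_zero _ _ _ _ u ?_ ?_ ?_
    · intro f; simp [ct_dT_T, hzX]
    · intro l; simp [ct_dT_X]
    · intro a' i'; simp [ct_dT_P]
  rw [h1, sub_self]

-- Case 8:
lemma case8 {u : E m n} (hχd : ∀ a b c, DifferentiableAt ℝ (χ a b c) u.1)
    (hΓd : ∀ i j k, DifferentiableAt ℝ (Γ i j k) u.2.1) (b : Fin m) (i k : Fin n) :
    curvR (berN χ Γ) (berD χ Γ) ((berN χ Γ).dX k) ((berN χ Γ).dT b) ((berN χ Γ).dX i) u
      = 0 := by
  have hzT : ∀ (l i₁ k₁ : Fin n), (berN χ Γ).delT b (fun v : E m n => Γ l i₁ k₁ v.2.1) u = 0 :=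
    fun l i₁ k₁ => delT_xfun _ _ _ (hΓd l i₁ k₁)
  rw [curvR]
  simp only [covD_dX_fun, covD_dT_fun]
  rw [ber_lie_zero χ Γ (diff_dX χ Γ k hΓd) (diff_dT χ Γ b hχd)
      (fun _ => rfl) (fun _ => rfl) (fun _ => rfl) (fun _ => rfl)
      (fun c' k' => covP_pt_dX χ Γ c' k' i u), sub_zero,
    ct_dX_zero χ Γ b i, covX_zero]
  have h1 : covT (berN χ Γ) (berD χ Γ) b (covX (berN χ Γ) (berD χ Γ) k ((berN χ Γ).dX i)) u
      = 0 := by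
    rw [covT]
    refine fromA_eq_zero _ _ _ _ u ?_ ?_ ?_
    · intro f; simp [cx_dX_T]
    · intro l; simp [cx_dX_X, hzT]
    · intro a' i'; simp [cx_dX_P]
  rw [h1, sub_self]

-- Case 9:
lemma case9 {u : E m n} (hχd : ∀ a b c, DifferentiableAt ℝ (χ a b c) u.1)
    (hΓd : ∀ i j k, DifferentiableAt ℝ (Γ i j k) u.2.1) (a b : Fin m) (i k : Fin n) :
    curvR (berN χ Γ) (berD χ Γ) ((berN χ Γ).dX k) ((berN χ Γ).dT b) (dPfield m n a i) u
      = 0 := by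
  have hzX2 : ∀ (r : ℝ) (f a₁ b₁ : Fin m),
      (berN χ Γ).delX k (fun v : E m n => r * χ f a₁ b₁ v.1) u = 0 :=
    fun r f a₁ b₁ => delX_tfun _ _ _ ((hχd f a₁ b₁).const_mul r)
  have hzT2 : ∀ (r : ℝ) (s r₁ k₁ : Fin n),
      (berN χ Γ).delT b (fun v : E m n => -(r * Γ s r₁ k₁ v.2.1)) u = 0 :=
    fun r s r₁ k₁ => delT_xfun _ _ _ (((hΓd s r₁ k₁).const_mul r).neg)
  rw [curvR]
  simp only [covD_dX_fun, covD_dT_fun]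
  rw [ber_lie_zero χ Γ (diff_dX χ Γ k hΓd) (diff_dT χ Γ b hχd)
      (fun _ => rfl) (fun _ => rfl) (fun _ => rfl) (fun _ => rfl)
      (fun c' k' => covP_pt_dP χ Γ c' k' a i u), sub_zero]
  rw [sub_eq_zero]
  refine Prod.ext ?_ (Prod.ext ?_ ?_)
  · funext f
    simp only [covX, covT, fromA, ct_dP_T, ct_dP_X, ct_dP_P, cx_dP_T, cx_dP_X, cx_dP_P,
      berD_A1, berD_A2, berD_A3, berD_H1, berD_H2, berD_H3, delX_zero, delT_zero]
    simp
  · funext l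
    simp only [covX, covT, fromA, ct_dP_T, ct_dP_X, ct_dP_P, cx_dP_T, cx_dP_X, cx_dP_P,
      berD_A1, berD_A2, berD_A3, berD_H1, berD_H2, berD_H3, delX_zero, delT_zero]
    simp
  · funext a' i'
    simp only [covX, covT, fromA, ct_dP_T, ct_dP_X, ct_dP_P, cx_dP_T, cx_dP_X, cx_dP_P,
      hzX2, hzT2, berD_A1, berD_A2, berD_A3, berD_H1, berD_H2, berD_H3, delX_zero,
      delT_zero]
    simp only [my_neg_ite, mul_ite, ite_mul, zero_mul, mul_zero, mul_one, one_mul,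
      neg_mul, mul_neg, neg_neg, neg_zero, Finset.sum_ite_eq, Finset.sum_ite_eq',
      Finset.mem_univ, if_true, Finset.sum_const_zero, add_zero, zero_add, sub_zero,
      zero_sub, eq_comm, sum_sum_ite_ite]
    first
      | ring
      | (split_ifs <;> simp_all [Finset.sum_ite_eq, Finset.sum_ite_eq'] <;> ring)

-- Case 10:
lemma case10 {u : E m n} (hχd : ∀ a b c, DifferentiableAt ℝ (χ a b c) u.1)
    (hΓd : ∀ i j k, DifferentiableAt ℝ (Γ i j k) u.2.1) (a b c : Fin m) (k : Fin n) :
    curvR (berN χ Γ) (berD χ Γ) (dPfield m n c k) ((berN χ Γ).dT b) ((berN χ Γ).dT a) u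
      = 0 := by
  have hzP : ∀ (f a₁ b₁ : Fin m), delP c k (fun v : E m n => χ f a₁ b₁ v.1) u = 0 :=
    fun f a₁ b₁ => delP_tfun _ _ _ (hχd f a₁ b₁)
  rw [curvR]
  simp only [covD_dP_fun, covD_dT_fun]
  rw [ber_lie_zero χ Γ (diff_dP c k u) (diff_dT χ Γ b hχd)
      (fun _ => rfl) (fun _ => rfl) (fun _ => rfl) (fun _ => rfl)
      (fun c' k' => covP_pt_dT χ Γ c' k' a u), sub_zero,
    covP_dT_zero χ Γ c k a, covT_zero]
  have h1 : covP (berN χ Γ) (berD χ Γ) c k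
      (covT (berN χ Γ) (berD χ Γ) b ((berN χ Γ).dT a)) u = 0 := by
    rw [covP]
    refine fromA_eq_zero _ _ _ _ u ?_ ?_ ?_
    · intro f; simp [ct_dT_T, hzP]
    · intro l; simp [ct_dT_X]
    · intro a' i'; simp [ct_dT_P]
  rw [h1, sub_self]

-- Case 11:
lemma case11 {u : E m n} (hχd : ∀ a b c, DifferentiableAt ℝ (χ a b c) u.1)
    (hΓd : ∀ i j k, DifferentiableAt ℝ (Γ i j k) u.2.1) (b c : Fin m) (i k : Fin n) :
    curvR (berN χ Γ) (berD χ Γ) (dPfield m n c k) ((berN χ Γ).dT b) ((berN χ Γ).dX i) u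
      = 0 := by
  rw [curvR]
  simp only [covD_dP_fun, covD_dT_fun]
  rw [ber_lie_zero χ Γ (diff_dP c k u) (diff_dT χ Γ b hχd)
      (fun _ => rfl) (fun _ => rfl) (fun _ => rfl) (fun _ => rfl)
      (fun c' k' => covP_pt_dX χ Γ c' k' i u), sub_zero,
    ct_dX_zero χ Γ b i, covP_zero, covP_dX_zero χ Γ c k i, covT_zero, sub_self]

-- Case 12:
lemma case12 {u : E m n} (hχd : ∀ a b c, DifferentiableAt ℝ (χ a b c) u.1)
    (hΓd : ∀ i j k, DifferentiableAt ℝ (Γ i j k) u.2.1) (a b c : Fin m) (i k : Fin n) :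
    curvR (berN χ Γ) (berD χ Γ) (dPfield m n c k) ((berN χ Γ).dT b) (dPfield m n a i) u
      = 0 := by
  have hzP2 : ∀ (r : ℝ) (f a₁ b₁ : Fin m),
      delP c k (fun v : E m n => r * χ f a₁ b₁ v.1) u = 0 :=
    fun r f a₁ b₁ => delP_tfun _ _ _ ((hχd f a₁ b₁).const_mul r)
  rw [curvR]
  simp only [covD_dP_fun, covD_dT_fun]
  rw [ber_lie_zero χ Γ (diff_dP c k u) (diff_dT χ Γ b hχd)
      (fun _ => rfl) (fun _ => rfl) (fun _ => rfl) (fun _ => rfl)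
      (fun c' k' => covP_pt_dP χ Γ c' k' a i u), sub_zero,
    covP_dP_zero χ Γ c k a i, covT_zero]
  have h1 : covP (berN χ Γ) (berD χ Γ) c k
      (covT (berN χ Γ) (berD χ Γ) b (dPfield m n a i)) u = 0 := by
    rw [covP]
    refine fromA_eq_zero _ _ _ _ u ?_ ?_ ?_
    · intro f; simp [ct_dP_T]
    · intro l; simp [ct_dP_X]
    · intro a' i'; simp only [ct_dP_P, hzP2, berD_C3]; simp
  rw [h1, sub_self]

-- Case 13:
lemma case13 {u : E m n} (hχd : ∀ a b c, DifferentiableAt ℝ (χ a b c) u.1)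
    (hΓd : ∀ i j k, DifferentiableAt ℝ (Γ i j k) u.2.1) (a c : Fin m) (j k : Fin n) :
    curvR (berN χ Γ) (berD χ Γ) (dPfield m n c k) ((berN χ Γ).dX j) ((berN χ Γ).dT a) u
      = 0 := by
  rw [curvR]
  simp only [covD_dP_fun, covD_dX_fun]
  rw [ber_lie_zero χ Γ (diff_dP c k u) (diff_dX χ Γ j hΓd)
      (fun _ => rfl) (fun _ => rfl) (fun _ => rfl) (fun _ => rfl)
      (fun c' k' => covP_pt_dT χ Γ c' k' a u), sub_zero,
    cx_dT_zero χ Γ j a, covP_zero, covP_dT_zero χ Γ c k a, covX_zero, sub_self]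

-- Case 14:
lemma case14 {u : E m n} (hχd : ∀ a b c, DifferentiableAt ℝ (χ a b c) u.1)
    (hΓd : ∀ i j k, DifferentiableAt ℝ (Γ i j k) u.2.1) (c : Fin m) (i j k : Fin n) :
    curvR (berN χ Γ) (berD χ Γ) (dPfield m n c k) ((berN χ Γ).dX j) ((berN χ Γ).dX i) u
      = 0 := by
  have hzP : ∀ (l i₁ k₁ : Fin n), delP c k (fun v : E m n => Γ l i₁ k₁ v.2.1) u = 0 :=
    fun l i₁ k₁ => delP_xfun _ _ _ (hΓd l i₁ k₁)
  rw [curvR]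
  simp only [covD_dP_fun, covD_dX_fun]
  rw [ber_lie_zero χ Γ (diff_dP c k u) (diff_dX χ Γ j hΓd)
      (fun _ => rfl) (fun _ => rfl) (fun _ => rfl) (fun _ => rfl)
      (fun c' k' => covP_pt_dX χ Γ c' k' i u), sub_zero,
    covP_dX_zero χ Γ c k i, covX_zero]
  have h1 : covP (berN χ Γ) (berD χ Γ) c k
      (covX (berN χ Γ) (berD χ Γ) j ((berN χ Γ).dX i)) u = 0 := by
    rw [covP]
    refine fromA_eq_zero _ _ _ _ u ?_ ?_ ?_
    · intro f; simp [cx_dX_T]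
    · intro l; simp [cx_dX_X, hzP]
    · intro a' i'; simp [cx_dX_P]
  rw [h1, sub_self]

-- Case 15:
lemma case15 {u : E m n} (hχd : ∀ a b c, DifferentiableAt ℝ (χ a b c) u.1)
    (hΓd : ∀ i j k, DifferentiableAt ℝ (Γ i j k) u.2.1) (a c : Fin m) (i j k : Fin n) :
    curvR (berN χ Γ) (berD χ Γ) (dPfield m n c k) ((berN χ Γ).dX j) (dPfield m n a i) u
      = 0 := by
  have hzP2 : ∀ (r : ℝ) (s r₁ k₁ : Fin n),
      delP c k (fun v : E m n => -(r * Γ s r₁ k₁ v.2.1)) u = 0 :=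
    fun r s r₁ k₁ => delP_xfun _ _ _ (((hΓd s r₁ k₁).const_mul r).neg)
  rw [curvR]
  simp only [covD_dP_fun, covD_dX_fun]
  rw [ber_lie_zero χ Γ (diff_dP c k u) (diff_dX χ Γ j hΓd)
      (fun _ => rfl) (fun _ => rfl) (fun _ => rfl) (fun _ => rfl)
      (fun c' k' => covP_pt_dP χ Γ c' k' a i u), sub_zero,
    covP_dP_zero χ Γ c k a i, covX_zero]
  have h1 : covP (berN χ Γ) (berD χ Γ) c k
      (covX (berN χ Γ) (berD χ Γ) j (dPfield m n a i)) u = 0 := by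
    rw [covP]
    refine fromA_eq_zero _ _ _ _ u ?_ ?_ ?_
    · intro f; simp [cx_dP_T]
    · intro l; simp [cx_dP_X]
    · intro a' i'; simp only [cx_dP_P, hzP2, berD_C3]; simp
  rw [h1, sub_self]

-- Case 16:
lemma case16 {u : E m n} (hχd : ∀ a b c, DifferentiableAt ℝ (χ a b c) u.1)
    (hΓd : ∀ i j k, DifferentiableAt ℝ (Γ i j k) u.2.1) (a b c : Fin m) (j k : Fin n) :
    curvR (berN χ Γ) (berD χ Γ) (dPfield m n c k) (dPfield m n b j) ((berN χ Γ).dT a) u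
      = 0 := by
  rw [curvR]
  simp only [covD_dP_fun]
  rw [ber_lie_zero χ Γ (diff_dP c k u) (diff_dP b j u)
      (fun _ => rfl) (fun _ => rfl) (fun _ => rfl) (fun _ => rfl)
      (fun c' k' => covP_pt_dT χ Γ c' k' a u), sub_zero,
    covP_dT_zero χ Γ b j a, covP_zero, covP_dT_zero χ Γ c k a, covP_zero, sub_self]

-- Case 17:
lemma case17 {u : E m n} (hχd : ∀ a b c, DifferentiableAt ℝ (χ a b c) u.1)
    (hΓd : ∀ i j k, DifferentiableAt ℝ (Γ i j k) u.2.1) (b c : Fin m) (i j k : Fin n) :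
    curvR (berN χ Γ) (berD χ Γ) (dPfield m n c k) (dPfield m n b j) ((berN χ Γ).dX i) u
      = 0 := by
  rw [curvR]
  simp only [covD_dP_fun]
  rw [ber_lie_zero χ Γ (diff_dP c k u) (diff_dP b j u)
      (fun _ => rfl) (fun _ => rfl) (fun _ => rfl) (fun _ => rfl)
      (fun c' k' => covP_pt_dX χ Γ c' k' i u), sub_zero,
    covP_dX_zero χ Γ b j i, covP_zero, covP_dX_zero χ Γ c k i, covP_zero, sub_self]

-- Case 18:
lemma case18 {u : E m n} (hχd : ∀ a b c, DifferentiableAt ℝ (χ a b c) u.1)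
    (hΓd : ∀ i j k, DifferentiableAt ℝ (Γ i j k) u.2.1) (a b c : Fin m) (i j k : Fin n) :
    curvR (berN χ Γ) (berD χ Γ) (dPfield m n c k) (dPfield m n b j) (dPfield m n a i) u
      = 0 := by
  rw [curvR]
  simp only [covD_dP_fun]
  rw [ber_lie_zero χ Γ (diff_dP c k u) (diff_dP b j u)
      (fun _ => rfl) (fun _ => rfl) (fun _ => rfl) (fun _ => rfl)
      (fun c' k' => covP_pt_dP χ Γ c' k' a i u), sub_zero,
    covP_dP_zero χ Γ b j a i, covP_zero, covP_dP_zero χ Γ c k a i, covP_zero, sub_self]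

end Cases


section Statements

open scoped BigOperators

theorem stmt19 (m n : ℕ) (U : Set (Fin m → ℝ)) (V : Set (Fin n → ℝ))
    (hU : IsOpen U) (hV : IsOpen V)
    (χ : Fin m → Fin m → Fin m → (Fin m → ℝ) → ℝ)
    (Γ : Fin n → Fin n → Fin n → (Fin n → ℝ) → ℝ)
    (hχ : ∀ a b c, ContDiffOn ℝ (⊤ : ℕ∞) (χ a b c) U)
    (hΓ : ∀ i j k, ContDiffOn ℝ (⊤ : ℕ∞) (Γ i j k) V) :
    ∀ u ∈ modelSet U V,
      (∀ a b c : Fin m,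
        curvR (berN χ Γ) (berD χ Γ) ((berN χ Γ).dT c) ((berN χ Γ).dT b) ((berN χ Γ).dT a) u
          = ∑ d, kapC χ d a b c u.1 • (berN χ Γ).dT d u)
      ∧ (∀ (a b c : Fin m) (i : Fin n),
        curvR (berN χ Γ) (berD χ Γ) ((berN χ Γ).dT c) ((berN χ Γ).dT b) (dPfield m n a i) u
          = ∑ d, kapC χ d a b c u.1 • dPnat m n d i)
      ∧ (∀ i j k : Fin n,
        curvR (berN χ Γ) (berD χ Γ) ((berN χ Γ).dX k) ((berN χ Γ).dX j) ((berN χ Γ).dX i) u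
          = ∑ l, rC Γ l i j k u.2.1 • (berN χ Γ).dX l u)
      ∧ (∀ (a : Fin m) (i j k : Fin n),
        curvR (berN χ Γ) (berD χ Γ) ((berN χ Γ).dX k) ((berN χ Γ).dX j) (dPfield m n a i) u
          = ∑ l, (-(rC Γ i l j k u.2.1)) • dPnat m n a l)
      ∧ (∀ (b c : Fin m) (i : Fin n),
        curvR (berN χ Γ) (berD χ Γ) ((berN χ Γ).dT c) ((berN χ Γ).dT b) ((berN χ Γ).dX i) u = 0)
      ∧ (∀ (a : Fin m) (j k : Fin n),
        curvR (berN χ Γ) (berD χ Γ) ((berN χ Γ).dX k) ((berN χ Γ).dX j) ((berN χ Γ).dT a) u = 0)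
      ∧ (∀ (a b : Fin m) (k : Fin n),
        curvR (berN χ Γ) (berD χ Γ) ((berN χ Γ).dX k) ((berN χ Γ).dT b) ((berN χ Γ).dT a) u = 0)
      ∧ (∀ (b : Fin m) (i : Fin n) (k : Fin n),
        curvR (berN χ Γ) (berD χ Γ) ((berN χ Γ).dX k) ((berN χ Γ).dT b) ((berN χ Γ).dX i) u = 0)
      ∧ (∀ (a b : Fin m) (i k : Fin n),
        curvR (berN χ Γ) (berD χ Γ) ((berN χ Γ).dX k) ((berN χ Γ).dT b) (dPfield m n a i) u = 0)
      ∧ (∀ (a b c : Fin m) (k : Fin n),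
        curvR (berN χ Γ) (berD χ Γ) (dPfield m n c k) ((berN χ Γ).dT b) ((berN χ Γ).dT a) u = 0)
      ∧ (∀ (b c : Fin m) (i k : Fin n),
        curvR (berN χ Γ) (berD χ Γ) (dPfield m n c k) ((berN χ Γ).dT b) ((berN χ Γ).dX i) u = 0)
      ∧ (∀ (a b c : Fin m) (i k : Fin n),
        curvR (berN χ Γ) (berD χ Γ) (dPfield m n c k) ((berN χ Γ).dT b) (dPfield m n a i) u = 0)
      ∧ (∀ (a c : Fin m) (j k : Fin n),
        curvR (berN χ Γ) (berD χ Γ) (dPfield m n c k) ((berN χ Γ).dX j) ((berN χ Γ).dT a) u = 0)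
      ∧ (∀ (c : Fin m) (i j k : Fin n),
        curvR (berN χ Γ) (berD χ Γ) (dPfield m n c k) ((berN χ Γ).dX j) ((berN χ Γ).dX i) u = 0)
      ∧ (∀ (a c : Fin m) (i j k : Fin n),
        curvR (berN χ Γ) (berD χ Γ) (dPfield m n c k) ((berN χ Γ).dX j) (dPfield m n a i) u = 0)
      ∧ (∀ (a b c : Fin m) (j k : Fin n),
        curvR (berN χ Γ) (berD χ Γ) (dPfield m n c k) (dPfield m n b j) ((berN χ Γ).dT a) u = 0)
      ∧ (∀ (b c : Fin m) (i j k : Fin n),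
        curvR (berN χ Γ) (berD χ Γ) (dPfield m n c k) (dPfield m n b j) ((berN χ Γ).dX i) u = 0)
      ∧ (∀ (a b c : Fin m) (i j k : Fin n),
        curvR (berN χ Γ) (berD χ Γ) (dPfield m n c k) (dPfield m n b j) (dPfield m n a i) u = 0) := by
  intro u hu
  have hu1 : u.1 ∈ U := hu.1
  have hu2 : u.2.1 ∈ V := hu.2.1
  have hχd : ∀ a b c, DifferentiableAt ℝ (χ a b c) u.1 :=
    fun a b c => ((hχ a b c).contDiffAt (hU.mem_nhds hu1)).differentiableAt (by simp)
  have hΓd : ∀ i j k, DifferentiableAt ℝ (Γ i j k) u.2.1 :=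
    fun i j k => ((hΓ i j k).contDiffAt (hV.mem_nhds hu2)).differentiableAt (by simp)
  exact ⟨fun a b c => case1 χ Γ hχd hΓd a b c,
    fun a b c i => case2 χ Γ hχd hΓd a b c i,
    fun i j k => case3 χ Γ hχd hΓd i j k,
    fun a i j k => case4 χ Γ hχd hΓd a i j k,
    fun b c i => case5 χ Γ hχd hΓd b c i,
    fun a j k => case6 χ Γ hχd hΓd a j k,
    fun a b k => case7 χ Γ hχd hΓd a b k,
    fun b i k => case8 χ Γ hχd hΓd b i k,
    fun a b i k => case9 χ Γ hχd hΓd a b i k,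
    fun a b c k => case10 χ Γ hχd hΓd a b c k,
    fun b c i k => case11 χ Γ hχd hΓd b c i k,
    fun a b c i k => case12 χ Γ hχd hΓd a b c i k,
    fun a c j k => case13 χ Γ hχd hΓd a c j k,
    fun c i j k => case14 χ Γ hχd hΓd c i j k,
    fun a c i j k => case15 χ Γ hχd hΓd a c i j k,
    fun a b c j k => case16 χ Γ hχd hΓd a b c j k,
    fun b c i j k => case17 χ Γ hχd hΓd b c i j k,
    fun a b c i j k => case18 χ Γ hχd hΓd a b c i j k⟩

end Statements
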